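/- Let α be irrational with convergent denominators (q_k), let k ≥ 1 and let Q ≥ 6 q_k. Then every connected component I of the circle ℝ/ℤ minus the points {α, 2α, …, q_k α} contains at least Q/(4 q_k) points of the form mα with q_k < m ≤ Q. -/

import Mathlib

/-!
Lift `x` to `ξ ∈ ℝ`. Its component is the image of an open interval `(a, b)` whose endpoints are
lifts of two of the points `mα`, `1 ≤ m ≤ q_k`, so `b - a = |dα - n|` with `|d| < q_k`; writing
`(d, n)` in the unimodular basis `(q_k, p_k), (q_{k-1}, p_{k-1})` gives the best-approximation
bound `b - a ≥ ‖q_{k-1}α‖`. Conversely, walking along the continued fraction shows that every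
closed arc of length `‖q_{k-1}α‖` contains a point `jα` with `1 ≤ j ≤ P := q_k + q_{k-1} ≤ 2q_k`.
Applied to `[a, a + ‖q_{k-1}α‖]` translated by `-sα`, this puts some `mα`, `s < m ≤ s + P`,
inside the component (irrationality keeps it off the endpoints) for every `s ≥ q_k`; as
`Q ≥ 6q_k`, the blocks `(q_k + wP, q_k + (w+1)P]` with `w < ⌈Q / (4q_k)⌉` all lie below `Q`.
-/
open Filter MeasureTheory

/-- The denominator `q_k` of the `k`-th continued fraction convergent of `α`. -/
noncomputable def cfDen (α : ℝ) (k : ℕ) : ℝ := (GenContFract.of α).dens k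

/-- The finite set `{α, 2α, …, q_k α}` on the circle `ℝ/ℤ`. -/
noncomputable def orbitPts (α : ℝ) (k : ℕ) : Set UnitAddCircle :=
  {p | ∃ m : ℕ, 1 ≤ m ∧ (m : ℝ) ≤ cfDen α k ∧ p = ((m * α : ℝ) : UnitAddCircle)}

open Set GenContFract

/-- For `n ≥ 1`, `|cfErr α n|` is the distance `‖q_n α‖` from `q_n α` to the nearest integer. -/
noncomputable def cfErr (α : ℝ) (n : ℕ) : ℝ :=
  (GenContFract.of α).dens n * α - (GenContFract.of α).nums n

section ContinuedFraction

variable {α : ℝ}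

lemma not_terminatedAt_of_irrational (hα : Irrational α) (n : ℕ) :
    ¬(GenContFract.of α).TerminatedAt n := fun h => by
  obtain ⟨r, hr⟩ := (terminates_iff_rat α).mp ⟨n, h⟩
  exact hα ⟨r, hr.symm⟩

lemma exists_s_get?_eq (hα : Irrational α) (n : ℕ) :
    ∃ b : ℕ, 1 ≤ b ∧ (GenContFract.of α).s.get? n = some ⟨1, b⟩ := by
  obtain ⟨⟨a, b⟩, hs⟩ := Option.ne_none_iff_exists'.1 (not_terminatedAt_of_irrational hα n)
  obtain ⟨z, hz⟩ := exists_int_eq_of_partDen (partDen_eq_s_b hs)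
  have ha : a = 1 := of_partNum_eq_one (partNum_eq_s_a hs)
  have hb : (1 : ℝ) ≤ b := of_one_le_get?_partDen (partDen_eq_s_b hs)
  simp only at hz hb
  subst ha hz
  have hz1 : 1 ≤ z := by exact_mod_cast hb
  refine ⟨z.toNat, by omega, ?_⟩
  rw [hs, show ((z.toNat : ℕ) : ℝ) = z by exact_mod_cast Int.toNat_of_nonneg (by omega)]

lemma exists_dens_nums_recurrence (hα : Irrational α) (n : ℕ) :
    ∃ b : ℕ, 1 ≤ b ∧
      (GenContFract.of α).dens (n + 2) =
        b * (GenContFract.of α).dens (n + 1) + (GenContFract.of α).dens n ∧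
      (GenContFract.of α).nums (n + 2) =
        b * (GenContFract.of α).nums (n + 1) + (GenContFract.of α).nums n := by
  obtain ⟨b, hb, hs⟩ := exists_s_get?_eq hα (n + 1)
  exact ⟨b, hb, by simpa using dens_recurrence hs rfl rfl,
    by simpa using nums_recurrence hs rfl rfl⟩

lemma exists_nat_eq_dens (hα : Irrational α) (n : ℕ) :
    ∃ q : ℕ, (GenContFract.of α).dens n = q := by
  induction n using Nat.twoStepInduction with
  | zero => exact ⟨1, by simp [zeroth_den_eq_one]⟩
  | one =>
    obtain ⟨b, -, hs⟩ := exists_s_get?_eq hα 0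
    exact ⟨b, first_den_eq hs⟩
  | more n ih₀ ih₁ =>
    obtain ⟨q₀, h₀⟩ := ih₀
    obtain ⟨q₁, h₁⟩ := ih₁
    obtain ⟨b, -, hrec, -⟩ := exists_dens_nums_recurrence hα n
    exact ⟨b * q₁ + q₀, by rw [hrec, h₀, h₁]; push_cast; ring⟩

lemma exists_int_eq_nums (hα : Irrational α) (n : ℕ) :
    ∃ p : ℤ, (GenContFract.of α).nums n = p := by
  induction n using Nat.twoStepInduction with
  | zero => exact ⟨⌊α⌋, by rw [zeroth_num_eq_h, of_h_eq_floor]⟩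
  | one =>
    obtain ⟨b, -, hs⟩ := exists_s_get?_eq hα 0
    exact ⟨b * ⌊α⌋ + 1, by rw [first_num_eq hs, of_h_eq_floor]; push_cast; ring⟩
  | more n ih₀ ih₁ =>
    obtain ⟨p₀, h₀⟩ := ih₀
    obtain ⟨p₁, h₁⟩ := ih₁
    obtain ⟨b, -, -, hrec⟩ := exists_dens_nums_recurrence hα n
    exact ⟨b * p₁ + p₀, by rw [hrec, h₀, h₁]; push_cast; ring⟩

lemma one_le_dens (n : ℕ) : 1 ≤ (GenContFract.of α).dens n := by
  induction n with
  | zero => simp [zeroth_den_eq_one]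
  | succ n ih => exact ih.trans of_den_mono

lemma stream_ne_none (hα : Irrational α) (n : ℕ) : IntFractPair.stream α n ≠ none := by
  cases n with
  | zero => simp [IntFractPair.stream]
  | succ n =>
    exact (not_congr of_terminatedAt_n_iff_succ_nth_intFractPair_stream_eq_none).1
      (not_terminatedAt_of_irrational hα n)

lemma neg_one_pow_mul_cfErr_pos (hα : Irrational α) (n : ℕ) : 0 < (-1) ^ n * cfErr α n := by
  obtain ⟨ifp, hifp⟩ := Option.ne_none_iff_exists'.1 (stream_ne_none hα n)
  have hconv : α - (GenContFract.of α).convs n ≠ 0 := by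
    obtain ⟨r, hr⟩ := exists_rat_eq_nth_conv (v := α) (n := n)
    rw [hr, sub_ne_zero]
    exact hα.ne_rat r
  have key := sub_convs_eq hifp
  have hfr : ifp.fr ≠ 0 := fun h => hconv (by simpa [h] using key)
  simp only [if_neg hfr] at key
  have hB : (GenContFract.of α).dens n = ((GenContFract.of α).contsAux (n + 1)).b := by
    rw [den_eq_conts_b, nth_cont_eq_succ_nth_contAux]
  have hBpos : 0 < ((GenContFract.of α).contsAux (n + 1)).b :=
    hB ▸ one_pos.trans_le (one_le_dens n)
  have hpB : 0 ≤ ((GenContFract.of α).contsAux n).b := zero_le_of_contsAux_b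
  have hfr' : 0 < ifp.fr⁻¹ := inv_pos.2 ((IntFractPair.nth_stream_fr_nonneg hifp).lt_of_ne' hfr)
  have herr : cfErr α n = (GenContFract.of α).dens n * (α - (GenContFract.of α).convs n) := by
    rw [cfErr, conv_eq_num_div_den, mul_sub, mul_div_cancel₀ _ (hB ▸ hBpos.ne')]
  have hsq : ((-1 : ℝ) ^ n) * (-1) ^ n = 1 := by rw [← mul_pow]; norm_num
  rw [herr, key, hB, mul_div_assoc', mul_div_assoc', ← mul_assoc, mul_comm _ ((-1 : ℝ) ^ n),
    ← mul_assoc, hsq, one_mul]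
  positivity

lemma abs_cfErr (hα : Irrational α) (n : ℕ) : |cfErr α n| = (-1) ^ n * cfErr α n := by
  rw [← abs_of_pos (neg_one_pow_mul_cfErr_pos hα n), abs_mul, abs_neg_one_pow, one_mul]

lemma abs_cfErr_pos (hα : Irrational α) (n : ℕ) : 0 < |cfErr α n| :=
  abs_cfErr hα n ▸ neg_one_pow_mul_cfErr_pos hα n

lemma cfErr_mul_cfErr_succ_neg (hα : Irrational α) (n : ℕ) :
    cfErr α n * cfErr α (n + 1) < 0 := by
  have h₀ := neg_one_pow_mul_cfErr_pos hα n
  have h₁ := neg_one_pow_mul_cfErr_pos hα (n + 1)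
  rcases neg_one_pow_eq_or ℝ n with h | h <;> simp only [pow_succ, h] at h₀ h₁ <;> nlinarith

lemma dens_succ_mul_abs_cfErr_add (hα : Irrational α) (n : ℕ) :
    (GenContFract.of α).dens (n + 1) * |cfErr α n| +
      (GenContFract.of α).dens n * |cfErr α (n + 1)| = 1 := by
  have hdet : (GenContFract.of α).nums n * (GenContFract.of α).dens (n + 1) -
      (GenContFract.of α).dens n * (GenContFract.of α).nums (n + 1) = (-1) ^ (n + 1) :=
    SimpContFract.determinant (s := SimpContFract.of α) (not_terminatedAt_of_irrational hα n)
  have hsq : ((-1 : ℝ) ^ n) * (-1) ^ n = 1 := by rw [← mul_pow]; norm_num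
  rw [abs_cfErr hα, abs_cfErr hα, cfErr, cfErr]
  rw [pow_succ] at hdet ⊢
  linear_combination (-(-1 : ℝ) ^ n) * hdet + hsq

lemma exists_abs_cfErr_recurrence (hα : Irrational α) (n : ℕ) :
    ∃ b : ℕ, 1 ≤ b ∧ (GenContFract.of α).dens (n + 2) =
        b * (GenContFract.of α).dens (n + 1) + (GenContFract.of α).dens n ∧
      |cfErr α n| = b * |cfErr α (n + 1)| + |cfErr α (n + 2)| := by
  obtain ⟨b, hb, hd, hn⟩ := exists_dens_nums_recurrence hα n
  refine ⟨b, hb, hd, ?_⟩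
  rw [abs_cfErr hα, abs_cfErr hα, abs_cfErr hα, cfErr, cfErr, cfErr, hd, hn, pow_succ, pow_succ]
  ring

lemma abs_cfErr_succ_lt (hα : Irrational α) (n : ℕ) : |cfErr α (n + 1)| < |cfErr α n| := by
  obtain ⟨b, hb, -, hrec⟩ := exists_abs_cfErr_recurrence hα n
  have hb' : (1 : ℝ) ≤ b := by exact_mod_cast hb
  nlinarith [abs_cfErr_pos hα (n + 1), abs_cfErr_pos hα (n + 2)]

end ContinuedFraction

/-- Write `(d, n) = x (q, p) + y (q', p')`: if `x, y` had the same sign then `|d| ≥ q`, and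
otherwise the two terms of `dα - n = x (qα - p) + y (q'α - p')` have the same sign. -/
lemma abs_mul_sub_le_of_isUnit {α : ℝ} {q p q' p' : ℤ} (hdet : IsUnit (p' * q - q' * p))
    (hq' : 0 ≤ q') (hsign : (q * α - p) * (q' * α - p') ≤ 0) {d n : ℤ} (hdn : d ≠ 0 ∨ n ≠ 0)
    (hd : |d| < q) : |q' * α - p'| ≤ |d * α - n| := by
  have hq : 0 < q := (abs_nonneg d).trans_lt hd
  obtain ⟨x, y, hxd, hxn⟩ : ∃ x y : ℤ, x * q + y * q' = d ∧ x * p + y * p' = n := by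
    set e := p' * q - q' * p
    have he : e * e = 1 := Int.isUnit_mul_self hdet
    exact ⟨e * (d * p' - n * q'), e * (n * q - d * p), by linear_combination d * he,
      by linear_combination n * he⟩
  have hval : d * α - n = x * (q * α - p) + y * (q' * α - p') := by
    rw [← hxd, ← hxn]
    push_cast
    ring
  rcases eq_or_ne y 0 with rfl | hy
  · rw [zero_mul, add_zero] at hxd hxn
    have hx : x ≠ 0 := by rintro rfl; simp [← hxd, ← hxn] at hdn
    have : q ≤ |d| := by
      rw [← hxd, abs_mul, abs_of_pos hq]
      nlinarith [Int.one_le_abs hx]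
    omega
  rcases lt_or_ge 0 (x * y) with hxy | hxy
  · have : q ≤ |d| := by
      rw [← hxd]
      rcases pos_and_pos_or_neg_and_neg_of_mul_pos hxy with ⟨hx, hy⟩ | ⟨hx, hy⟩
      · rw [abs_of_pos (by nlinarith)]; nlinarith
      · rw [abs_of_neg (by nlinarith)]; nlinarith
    omega
  have hxyR : (x : ℝ) * y ≤ 0 := by exact_mod_cast hxy
  have hy1 : (1 : ℝ) ≤ |(y : ℝ)| := by exact_mod_cast Int.one_le_abs hy
  calc |q' * α - p'| ≤ |(y : ℝ)| * |q' * α - p'| := le_mul_of_one_le_left (abs_nonneg _) hy1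
    _ = |y * (q' * α - p')| := (abs_mul _ _).symm
    _ ≤ |d * α - n| := by
      rw [hval]
      apply sq_le_sq.1
      nlinarith [mul_nonneg_of_nonpos_of_nonpos hxyR hsign]

lemma abs_cfErr_le_abs_mul_sub {α : ℝ} (hα : Irrational α) (k : ℕ) {d n : ℤ}
    (hdn : d ≠ 0 ∨ n ≠ 0) (hd : |(d : ℝ)| < (GenContFract.of α).dens (k + 1)) :
    |cfErr α k| ≤ |d * α - n| := by
  obtain ⟨q, hq⟩ := exists_nat_eq_dens hα (k + 1)
  obtain ⟨q', hq'⟩ := exists_nat_eq_dens hα k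
  obtain ⟨p, hp⟩ := exists_int_eq_nums hα (k + 1)
  obtain ⟨p', hp'⟩ := exists_int_eq_nums hα k
  have hdet : p' * (q : ℤ) - (q' : ℤ) * p = (-1) ^ (k + 1) := by
    have h := SimpContFract.determinant (s := SimpContFract.of α)
      (not_terminatedAt_of_irrational hα k)
    change (GenContFract.of α).nums k * (GenContFract.of α).dens (k + 1) -
      (GenContFract.of α).dens k * (GenContFract.of α).nums (k + 1) = _ at h
    rw [hq, hp, hq', hp'] at h
    exact_mod_cast h
  have hsign := cfErr_mul_cfErr_succ_neg hα k
  rw [cfErr, cfErr, hq, hp, hq', hp'] at hsign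
  rw [hq] at hd
  have := abs_mul_sub_le_of_isUnit (q := q) (p := p) (q' := q') (p' := p') (α := α)
    (hdet ▸ isUnit_neg_one.pow _) (by positivity) (by push_cast; nlinarith) hdn
    (by rw [← Int.cast_abs] at hd; exact_mod_cast hd)
  rw [cfErr, hq', hp']
  exact_mod_cast this

def OrbitMeetsIntervals (α J w : ℝ) : Prop :=
  ∀ c : ℝ, ∃ j : ℕ, ∃ n : ℤ, 1 ≤ j ∧ (j : ℝ) ≤ J ∧ j * α - n ∈ Icc c (c + w)

lemma orbitMeetsIntervals_one_one (α : ℝ) : OrbitMeetsIntervals α 1 1 := fun c =>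
  ⟨1, ⌊α - c⌋, le_rfl, by simp, by
    constructor <;> push_cast <;> linarith [Int.floor_le (α - c), Int.lt_floor_add_one (α - c)]⟩

lemma exists_nat_sub_mul_mem_Icc {c w δ y : ℝ} {b : ℕ} (hδ : 0 < δ) (hw : w < (b + 1) * δ)
    (hy : y ∈ Icc c (c + w)) : ∃ t : ℕ, t ≤ b ∧ y - t * δ ∈ Icc c (c + δ) := by
  have h0 : 0 ≤ (y - c) / δ := div_nonneg (by linarith [hy.1]) hδ.le
  refine ⟨⌊(y - c) / δ⌋₊, ?_, ?_, ?_⟩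
  · rw [← Nat.lt_succ_iff, Nat.floor_lt h0, div_lt_iff₀ hδ]
    push_cast
    linarith [hy.2]
  · have := (le_div_iff₀ hδ).1 (Nat.floor_le h0)
    linarith
  · have := (div_lt_iff₀ hδ).1 (Nat.lt_floor_add_one ((y - c) / δ))
    linarith

/-- Starting from a point of the coarser net on the appropriate side of `[c, c + |qα - p|]`, at most
`b` steps of `qα - p` land in it. -/
lemma OrbitMeetsIntervals.step {α J J' w : ℝ} (h : OrbitMeetsIntervals α J w) {q b : ℕ} {p : ℤ}
    (hr : 0 < |q * α - p|) (hw : w < (b + 1) * |q * α - p|) (hJ : J + b * q ≤ J') :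
    OrbitMeetsIntervals α J' |q * α - p| := by
  intro c
  have hJ' {j t : ℕ} (hj : (j : ℝ) ≤ J) (ht : t ≤ b) : ((j + t * q : ℕ) : ℝ) ≤ J' := by
    have : (t : ℝ) * q ≤ b * q := by gcongr
    push_cast
    linarith
  rcases lt_or_gt_of_ne (abs_pos.1 hr) with hneg | hpos
  · obtain ⟨j, n, hj, hjJ, hy⟩ := h c
    obtain ⟨t, htb, ht⟩ := exists_nat_sub_mul_mem_Icc hr hw hy
    refine ⟨j + t * q, n + t * p, by omega, hJ' hjJ htb, ?_⟩
    rw [abs_of_neg hneg] at ht ⊢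
    convert ht using 1
    push_cast
    ring
  · obtain ⟨j, n, hj, hjJ, hy⟩ := h (c + |q * α - p| - w)
    obtain ⟨t, htb, ht⟩ := exists_nat_sub_mul_mem_Icc (y := -(j * α - n)) (c := -c - |q * α - p|)
      hr hw ⟨by linarith [hy.2], by linarith [hy.1]⟩
    refine ⟨j + t * q, n + t * p, by omega, hJ' hjJ htb, ?_⟩
    rw [abs_of_pos hpos] at ht ⊢
    constructor <;> push_cast <;> linarith [ht.1, ht.2]

lemma OrbitMeetsIntervals.step_cfErr {α J J' w : ℝ} (hα : Irrational α)
    (h : OrbitMeetsIntervals α J w) {n b : ℕ} (hw : w < (b + 1) * |cfErr α n|)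
    (hJ : J + b * (GenContFract.of α).dens n ≤ J') : OrbitMeetsIntervals α J' |cfErr α n| := by
  obtain ⟨q, hq⟩ := exists_nat_eq_dens hα n
  obtain ⟨p, hp⟩ := exists_int_eq_nums hα n
  have hr : cfErr α n = q * α - p := by rw [cfErr, hq, hp]
  rw [hr] at hw ⊢
  rw [hq] at hJ
  exact h.step (hr ▸ abs_cfErr_pos hα n) hw hJ

lemma orbitMeetsIntervals_dens {α : ℝ} (hα : Irrational α) (n : ℕ) :
    OrbitMeetsIntervals α ((GenContFract.of α).dens (n + 1) + (GenContFract.of α).dens n)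
      |cfErr α n| := by
  induction n with
  | zero =>
    obtain ⟨q₁, hq₁⟩ := exists_nat_eq_dens hα 1
    have hdet := dens_succ_mul_abs_cfErr_add hα 0
    rw [zeroth_den_eq_one, hq₁] at hdet
    refine (orbitMeetsIntervals_one_one α).step_cfErr hα (b := q₁) ?_ ?_
    · linarith [abs_cfErr_succ_lt hα 0]
    · rw [hq₁, zeroth_den_eq_one]
      linarith
  | succ n ih =>
    obtain ⟨b, -, hd, hrec⟩ := exists_abs_cfErr_recurrence hα n
    refine ih.step_cfErr hα (b := b) ?_ ?_
    · linarith [abs_cfErr_succ_lt hα (n + 1)]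
    · rw [hd]
      linarith

lemma exists_gap_around {ι : Type*} {s : Finset ι} (hs : s.Nonempty) (g : ι → ℝ) {ξ : ℝ}
    (hξ : ∀ i ∈ s, ∀ n : ℤ, g i - n ≠ ξ) :
    ∃ i ∈ s, ∃ j ∈ s, ∃ nᵢ nⱼ : ℤ, g i - nᵢ < ξ ∧ ξ < g j - nⱼ ∧
      ∀ l ∈ s, ∀ n : ℤ, g l - n ∉ Ioo (g i - nᵢ) (g j - nⱼ) := by
  obtain ⟨i, hi, hmax⟩ := s.exists_max_image (fun l => g l - ⌈g l - ξ⌉) hs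
  obtain ⟨j, hj, hmin⟩ := s.exists_min_image (fun l => g l - ⌊g l - ξ⌋) hs
  refine ⟨i, hi, j, hj, _, _, (by linarith [Int.le_ceil (g i - ξ)] : _ ≤ ξ).lt_of_ne (hξ i hi _),
    (by linarith [Int.floor_le (g j - ξ)] : ξ ≤ _).lt_of_ne' (hξ j hj _), fun l hl n hn => ?_⟩
  rcases le_total (g l - n) ξ with h | h
  · have : (⌈g l - ξ⌉ : ℝ) ≤ n := by exact_mod_cast Int.ceil_le.2 (by linarith)
    linarith [hmax l hl, hn.2, hn.1]
  · have : (n : ℝ) ≤ ⌊g l - ξ⌋ := by exact_mod_cast Int.le_floor.2 (by linarith)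
    linarith [hmin l hl, hn.2]

lemma UnitAddCircle.coe_eq_coe_iff {y z : ℝ} :
    (y : UnitAddCircle) = z ↔ ∃ n : ℤ, y = z - n := by
  rw [← sub_eq_zero, ← AddCircle.coe_sub, AddCircle.coe_eq_zero_iff]
  simp only [zsmul_one]
  constructor <;> rintro ⟨n, h⟩ <;> exact ⟨-n, by push_cast; linarith⟩

lemma Irrational.natCast_mul_sub_intCast_ne {α : ℝ} (hα : Irrational α) {m m' : ℕ} (hm : m ≠ m')
    (n n' : ℤ) : (m : ℝ) * α - n ≠ m' * α - n' := fun h =>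
  ((hα.intCast_mul (sub_ne_zero.2 (Int.ofNat_inj.not.2 hm))).ne_int (n - n')) (by
    push_cast
    linarith)

lemma exists_Ioo_subset_connectedComponentIn {α : ℝ} (hα : Irrational α) {k q : ℕ} (hk : 1 ≤ k)
    (hq : cfDen α k = q) {ξ : ℝ} (hξ : (ξ : UnitAddCircle) ∉ orbitPts α k) :
    ∃ a b : ℝ, (∃ m ∈ Finset.Icc 1 q, ∃ n : ℤ, a = m * α - n) ∧
      (∃ m ∈ Finset.Icc 1 q, ∃ n : ℤ, b = m * α - n) ∧ |cfErr α (k - 1)| ≤ b - a ∧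
      ((↑) : ℝ → UnitAddCircle) '' Ioo a b ⊆ connectedComponentIn (orbitPts α k)ᶜ ξ := by
  have hmem {m : ℕ} {z : ℝ} (hm : m ∈ Finset.Icc 1 q)
      (hz : (z : UnitAddCircle) = ((m * α : ℝ) : UnitAddCircle)) :
      (z : UnitAddCircle) ∈ orbitPts α k := by
    rw [Finset.mem_Icc] at hm
    exact ⟨m, hm.1, by rw [hq]; exact_mod_cast hm.2, hz⟩
  have hoff : ∀ m ∈ Finset.Icc 1 q, ∀ n : ℤ, (m : ℝ) * α - n ≠ ξ := fun m hm n h =>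
    hξ (hmem hm (UnitAddCircle.coe_eq_coe_iff.2 ⟨n, h.symm⟩))
  have hq1 : 1 ≤ q := by exact_mod_cast (hq ▸ one_le_dens k : (1 : ℝ) ≤ q)
  obtain ⟨m₁, hm₁, m₂, hm₂, n₁, n₂, haξ, hξb, hgap⟩ :=
    exists_gap_around ⟨1, Finset.mem_Icc.2 ⟨le_rfl, hq1⟩⟩ (fun m : ℕ => m * α) hoff
  refine ⟨_, _, ⟨m₁, hm₁, n₁, rfl⟩, ⟨m₂, hm₂, n₂, rfl⟩, ?_, ?_⟩
  · rw [Finset.mem_Icc] at hm₁ hm₂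
    have hd : |((m₂ - m₁ : ℤ) : ℝ)| < (GenContFract.of α).dens (k - 1 + 1) := by
      rw [Nat.sub_add_cancel hk, ← Int.cast_abs]
      change _ < cfDen α k
      rw [hq]
      exact_mod_cast (abs_sub_lt_iff.2 ⟨by omega, by omega⟩ : |(m₂ : ℤ) - m₁| < q)
    have hdn : (m₂ - m₁ : ℤ) ≠ 0 ∨ n₂ - n₁ ≠ 0 := by
      by_contra! h
      obtain ⟨rfl, rfl⟩ : m₂ = m₁ ∧ n₂ = n₁ := by omega
      linarith
    calc |cfErr α (k - 1)| ≤ |((m₂ - m₁ : ℤ) : ℝ) * α - ((n₂ - n₁ : ℤ) : ℝ)| :=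
          abs_cfErr_le_abs_mul_sub hα (k - 1) hdn hd
      _ = _ := by
          rw [abs_of_pos (by push_cast; linarith)]
          push_cast
          ring
  · refine (isPreconnected_Ioo.image _ (AddCircle.continuous_mk' 1).continuousOn)
      |>.subset_connectedComponentIn ⟨ξ, ⟨haξ, hξb⟩, rfl⟩ ?_
    rintro _ ⟨r, hr, rfl⟩ ⟨m, hm1, hmq, hrm⟩
    obtain ⟨n, rfl⟩ := UnitAddCircle.coe_eq_coe_iff.1 hrm
    exact hgap m (Finset.mem_Icc.2 ⟨hm1, by rw [hq] at hmq; exact_mod_cast hmq⟩) n hr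

lemma exists_mem_connectedComponentIn {α : ℝ} (hα : Irrational α) {k q q' : ℕ} (hk : 1 ≤ k)
    (hq : cfDen α k = q) (hq' : cfDen α (k - 1) = q') {x : UnitAddCircle}
    (hx : x ∉ orbitPts α k) {s : ℕ} (hs : q ≤ s) :
    ∃ m : ℕ, s < m ∧ m ≤ s + (q + q') ∧
      ((m * α : ℝ) : UnitAddCircle) ∈ connectedComponentIn (orbitPts α k)ᶜ x := by
  obtain ⟨ξ, rfl⟩ := QuotientAddGroup.mk_surjective x
  obtain ⟨a, b, ⟨m₁, hm₁, n₁, rfl⟩, ⟨m₂, hm₂, n₂, rfl⟩, hgap, hC⟩ :=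
    exists_Ioo_subset_connectedComponentIn hα hk hq hx
  rw [Finset.mem_Icc] at hm₁ hm₂
  have hcover := orbitMeetsIntervals_dens hα (k - 1)
  rw [Nat.sub_add_cancel hk] at hcover
  obtain ⟨j, n, hj, hjJ, hy⟩ := hcover (m₁ * α - n₁ - s * α)
  have hjJ' : j ≤ q + q' := by
    change (j : ℝ) ≤ cfDen α k + cfDen α (k - 1) at hjJ
    rw [hq, hq'] at hjJ
    exact_mod_cast hjJ
  refine ⟨s + j, by omega, by omega, hC ⟨(s + j : ℕ) * α - n, ⟨?_, ?_⟩, ?_⟩⟩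
  · refine lt_of_le_of_ne ?_ (hα.natCast_mul_sub_intCast_ne (by omega) _ _).symm
    push_cast
    linarith [hy.1]
  · refine lt_of_le_of_ne ?_ (hα.natCast_mul_sub_intCast_ne (by omega) _ _)
    push_cast
    linarith [hy.2]
  · exact UnitAddCircle.coe_eq_coe_iff.2 ⟨n, rfl⟩

lemma le_ncard_of_forall_exists_mem_Ioc {S : Set ℕ} (hS : S.Finite) {s P W : ℕ}
    (h : ∀ w < W, ∃ m ∈ S, s + w * P < m ∧ m ≤ s + w * P + P) : W ≤ S.ncard := by
  choose! f hfS hf using h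
  have hmono : StrictMonoOn f (Iio W) := fun u hu v hv huv =>
    calc f u ≤ s + u * P + P := (hf u hu).2
      _ ≤ s + v * P := by nlinarith
      _ < f v := (hf v hv).1
  rw [← Set.ncard_Iio_nat W]
  exact Set.ncard_le_ncard_of_injOn f hfS hmono.injOn hS

theorem stmt11 (α : ℝ) (hα : Irrational α) (k : ℕ) (hk : 1 ≤ k)
    (Q : ℝ) (hQ : 6 * cfDen α k ≤ Q) :
    ∀ x : UnitAddCircle, x ∈ (orbitPts α k)ᶜ →
      Q / (4 * cfDen α k) ≤
        ({m : ℕ | cfDen α k < (m : ℝ) ∧ (m : ℝ) ≤ Q ∧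
          ((m * α : ℝ) : UnitAddCircle) ∈ connectedComponentIn (orbitPts α k)ᶜ x}.ncard : ℝ) := by
  intro x hx
  obtain ⟨q, hq⟩ : ∃ q : ℕ, cfDen α k = q := exists_nat_eq_dens hα k
  obtain ⟨q', hq'⟩ : ∃ q' : ℕ, cfDen α (k - 1) = q' := exists_nat_eq_dens hα (k - 1)
  have hq1 : (1 : ℝ) ≤ q := hq ▸ one_le_dens k
  have hq'q : (q' : ℝ) ≤ q := by
    rw [← hq, ← hq', cfDen, cfDen, ← Nat.sub_add_cancel hk]
    exact of_den_mono
  rw [hq] at hQ ⊢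
  set W := ⌈Q / (4 * q)⌉₊
  have hWQ : (q + W * (q + q') : ℝ) ≤ Q := by
    have h0 : 0 ≤ Q / (4 * q) := div_nonneg (by linarith) (by positivity)
    have hW : (W - 1 : ℝ) * (4 * q) < Q :=
      (lt_div_iff₀ (by positivity)).1 (by linarith [Nat.ceil_lt_add_one h0])
    nlinarith [mul_le_mul_of_nonneg_left hq'q W.cast_nonneg]
  refine (Nat.le_ceil _).trans (Nat.cast_le.2
    (le_ncard_of_forall_exists_mem_Ioc (s := q) (P := q + q') ?_ fun w hw => ?_))
  · exact (Set.finite_Iic ⌊Q⌋₊).subset fun m hm => Nat.le_floor hm.2.1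
  · obtain ⟨m, hsm, hms, hmC⟩ :=
      exists_mem_connectedComponentIn hα hk hq hq' hx (s := q + w * (q + q')) (by omega)
    refine ⟨m, ⟨by exact_mod_cast hsm.trans_le' (by omega), ?_, hmC⟩, hsm, hms⟩
    have : (m : ℝ) ≤ q + W * (q + q') := by
      have : m ≤ q + W * (q + q') := hms.trans (by nlinarith)
      exact_mod_cast this
    linarith
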